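/- arXiv:2110.11743 — 8 statements merged into one kernel-verified Lean document; each statement's English description precedes it below -/
import Mathlib

section
/- Let (α, β, γ, δ) be maps satisfying conditions (A1)–(A7) with respect to a matched pair of groups (H, K). Then α(1) = 1, β(1) = 1, γ(1) = 1 and δ(1) = 1. -/
/-- If maps `α, β, γ, δ` satisfy conditions (A1)–(A7) with respect to a
matched pair of groups `(H, K)`, then `α 1 = 1`, `β 1 = 1`, `γ 1 = 1` and `δ 1 = 1`. -/
theorem zs_maps_one {H K : Type*} [Group H] [Group K]
    (dot : K → H → H) (pow : K → H → K)
    (C1a : ∀ h : H, dot 1 h = h) (C1b : ∀ k : K, pow k 1 = k)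
    (C2a : ∀ k : K, dot k 1 = 1) (C2b : ∀ h : H, pow 1 h = 1)
    (C3 : ∀ (k k' : K) (h : H), dot (k * k') h = dot k (dot k' h))
    (C4 : ∀ (k k' : K) (h : H), pow (k * k') h = pow k (dot k' h) * pow k' h)
    (C5 : ∀ (k : K) (h h' : H), dot k (h * h') = dot k h * dot (pow k h) h')
    (C6 : ∀ (k : K) (h h' : H), pow k (h * h') = pow (pow k h) h')
    (α : H → H) (β : K → H) (γ : H → K) (δ : K → K)
    (A1 : ∀ h h' : H, α (h * h') = α h * dot (γ h) (α h'))
    (A2 : ∀ h h' : H, γ (h * h') = pow (γ h) (α h') * γ h')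
    (A3 : ∀ k k' : K, β (k * k') = β k * dot (δ k) (β k'))
    (A4 : ∀ k k' : K, δ (k * k') = pow (δ k) (β k') * δ k')
    (A5 : ∀ (k : K) (h : H),
      β k * dot (δ k) (α h) = α (dot k h) * dot (γ (dot k h)) (β (pow k h)))
    (A6 : ∀ (k : K) (h : H),
      pow (δ k) (α h) * γ h = pow (γ (dot k h)) (β (pow k h)) * δ (pow k h))
    (A7 : ∀ (h' : H) (k' : K), ∃! p : H × K,
      h' = α p.1 * dot (γ p.1) (β p.2) ∧ k' = pow (γ p.1) (β p.2) * δ p.2) :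
    α 1 = 1 ∧ β 1 = 1 ∧ γ 1 = 1 ∧ δ 1 = 1 := by
  have hdγα : dot (γ 1) (α 1) = 1 := by
    have := A1 1 1
    rw [one_mul] at this
    exact (left_eq_mul.mp this)
  have hpγα : pow (γ 1) (α 1) = 1 := by
    have := A2 1 1
    rw [one_mul] at this
    exact mul_right_cancel (this.symm.trans (one_mul _).symm)
  have hdδβ : dot (δ 1) (β 1) = 1 := by
    have := A3 1 1
    rw [one_mul] at this
    exact (left_eq_mul.mp this)
  have hpδβ : pow (δ 1) (β 1) = 1 := by
    have := A4 1 1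
    rw [one_mul] at this
    exact mul_right_cancel (this.symm.trans (one_mul _).symm)
  have hα : α 1 = 1 := by
    calc α 1 = dot ((γ 1)⁻¹ * γ 1) (α 1) := by rw [inv_mul_cancel, C1a]
    _ = dot (γ 1)⁻¹ (dot (γ 1) (α 1)) := C3 _ _ _
    _ = 1 := by rw [hdγα, C2a]
  have hγ : γ 1 = 1 := by
    calc γ 1 = pow (γ 1) 1 := (C1b _).symm
    _ = pow (γ 1) (α 1) := by rw [hα]
    _ = 1 := hpγα
  have hβ : β 1 = 1 := by
    calc β 1 = dot ((δ 1)⁻¹ * δ 1) (β 1) := by rw [inv_mul_cancel, C1a]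
    _ = dot (δ 1)⁻¹ (dot (δ 1) (β 1)) := C3 _ _ _
    _ = 1 := by rw [hdδβ, C2a]
  have hδ : δ 1 = 1 := by
    calc δ 1 = pow (δ 1) 1 := (C1b _).symm
    _ = pow (δ 1) (β 1) := by rw [hβ]
    _ = 1 := hpδβ
  exact ⟨hα, hβ, hγ, hδ⟩
end

section
/- Let (α, β, γ, δ) be maps satisfying conditions (A1)–(A7) with respect to a matched pair of groups (H, K). Then {h ∈ H | α(h) = 1} ∩ {h ∈ H | γ(h) = 1} = {1} and {k ∈ K | β(k) = 1} ∩ {k ∈ K | δ(k) = 1} = {1}; that is, if α(h) = 1 and γ(h) = 1 then h = 1, and if β(k) = 1 and δ(k) = 1 then k = 1. -/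
/-!
The map `(h, k) ↦ (α h · (γ h · β k), γ h ^ β k · δ k)` is a bijection of `H × K` by (A7).
The cocycle identities (A1)–(A4) force `α, β, γ, δ` to send `1` to `1`, so this map sends `(1, 1)`,
every `(h, 1)` with `α h = γ h = 1`, and every `(1, k)` with `β k = δ k = 1` to `(1, 1)`;
injectivity then gives `h = 1` and `k = 1`.
-/

theorem eq_one_of_dot_eq_one {H K : Type*} [One H] [Group K] (dot : K → H → H)
    (one_dot : ∀ h : H, dot 1 h = h) (dot_one : ∀ k : K, dot k 1 = 1)
    (mul_dot : ∀ (k k' : K) (h : H), dot (k * k') h = dot k (dot k' h)) {k : K} {x : H}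
    (hx : dot k x = 1) : x = 1 :=
  calc x = dot (k⁻¹ * k) x := by rw [inv_mul_cancel, one_dot]
    _ = 1 := by rw [mul_dot, hx, dot_one]

theorem map_one_of_cocycle {G H K : Type*} [Monoid G] [LeftCancelMonoid H] (dot : K → H → H)
    (hdot : ∀ (k : K) (x : H), dot k x = 1 → x = 1) (f : G → H) (c : G → K)
    (hf : ∀ g g' : G, f (g * g') = f g * dot (c g) (f g')) : f 1 = 1 :=
  hdot (c 1) (f 1) (left_eq_mul.mp (by simpa only [one_mul] using hf 1 1))

theorem map_one_of_pow_cocycle {G H K : Type*} [Monoid G] [One H] [RightCancelMonoid K]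
    (pow : K → H → K) (pow_one : ∀ k : K, pow k 1 = k) (f : G → H) (c : G → K)
    (hc : ∀ g g' : G, c (g * g') = pow (c g) (f g') * c g') (hf : f 1 = 1) : c 1 = 1 := by
  have h : pow (c 1) (f 1) = 1 := right_eq_mul.mp (by simpa only [one_mul] using hc 1 1)
  rwa [hf, pow_one] at h

theorem zs_kernels_intersect_trivially_general {H K : Type*} [Group H] [Group K]
    (dot : K → H → H) (pow : K → H → K)
    (C1a : ∀ h : H, dot 1 h = h) (C1b : ∀ k : K, pow k 1 = k)
    (C2a : ∀ k : K, dot k 1 = 1) (C2b : ∀ h : H, pow 1 h = 1)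
    (C3 : ∀ (k k' : K) (h : H), dot (k * k') h = dot k (dot k' h))
    (α : H → H) (β : K → H) (γ : H → K) (δ : K → K)
    (A1 : ∀ h h' : H, α (h * h') = α h * dot (γ h) (α h'))
    (A2 : ∀ h h' : H, γ (h * h') = pow (γ h) (α h') * γ h')
    (A3 : ∀ k k' : K, β (k * k') = β k * dot (δ k) (β k'))
    (A4 : ∀ k k' : K, δ (k * k') = pow (δ k) (β k') * δ k')
    (A7 : ∀ (h' : H) (k' : K), ∃! p : H × K,
      h' = α p.1 * dot (γ p.1) (β p.2) ∧ k' = pow (γ p.1) (β p.2) * δ p.2) :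
    ({h : H | α h = 1} ∩ {h : H | γ h = 1} = {1}) ∧
    ({k : K | β k = 1} ∩ {k : K | δ k = 1} = {1}) := by
  have hdot : ∀ (k : K) (x : H), dot k x = 1 → x = 1 :=
    fun _ _ ↦ eq_one_of_dot_eq_one dot C1a C2a C3
  have α1 : α 1 = 1 := map_one_of_cocycle dot hdot α γ A1
  have β1 : β 1 = 1 := map_one_of_cocycle dot hdot β δ A3
  have γ1 : γ 1 = 1 := map_one_of_pow_cocycle pow C1b α γ A2 α1
  have δ1 : δ 1 = 1 := map_one_of_pow_cocycle pow C1b β δ A4 β1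
  have eq_one_one : ∀ p : H × K,
      1 = α p.1 * dot (γ p.1) (β p.2) ∧ 1 = pow (γ p.1) (β p.2) * δ p.2 → p = (1, 1) :=
    fun p hp ↦ (A7 1 1).unique hp (by simp only [α1, β1, γ1, δ1, C1a, C2b, one_mul, and_self])
  refine ⟨Set.eq_singleton_iff_unique_mem.mpr ⟨⟨α1, γ1⟩, ?_⟩,
    Set.eq_singleton_iff_unique_mem.mpr ⟨⟨β1, δ1⟩, ?_⟩⟩
  · rintro h ⟨hα : α h = 1, hγ : γ h = 1⟩
    exact congrArg Prod.fst <| eq_one_one (h, 1) <| by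
      simp only [hα, hγ, β1, δ1, C1a, C2b, one_mul, and_self]
  · rintro k ⟨hβ : β k = 1, hδ : δ k = 1⟩
    exact congrArg Prod.snd <| eq_one_one (1, k) <| by
      simp only [hβ, hδ, α1, γ1, C1b, C2a, mul_one, and_self]

/-- If maps `α, β, γ, δ` satisfy conditions (A1)–(A7) with respect to a
matched pair of groups `(H, K)`, then `ker α ∩ ker γ = {1}` and `ker β ∩ ker δ = {1}`. -/
theorem zs_kernels_intersect_trivially {H K : Type*} [Group H] [Group K]
    (dot : K → H → H) (pow : K → H → K)
    (C1a : ∀ h : H, dot 1 h = h) (C1b : ∀ k : K, pow k 1 = k)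
    (C2a : ∀ k : K, dot k 1 = 1) (C2b : ∀ h : H, pow 1 h = 1)
    (C3 : ∀ (k k' : K) (h : H), dot (k * k') h = dot k (dot k' h))
    (C4 : ∀ (k k' : K) (h : H), pow (k * k') h = pow k (dot k' h) * pow k' h)
    (C5 : ∀ (k : K) (h h' : H), dot k (h * h') = dot k h * dot (pow k h) h')
    (C6 : ∀ (k : K) (h h' : H), pow k (h * h') = pow (pow k h) h')
    (α : H → H) (β : K → H) (γ : H → K) (δ : K → K)
    (A1 : ∀ h h' : H, α (h * h') = α h * dot (γ h) (α h'))
    (A2 : ∀ h h' : H, γ (h * h') = pow (γ h) (α h') * γ h')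
    (A3 : ∀ k k' : K, β (k * k') = β k * dot (δ k) (β k'))
    (A4 : ∀ k k' : K, δ (k * k') = pow (δ k) (β k') * δ k')
    (A5 : ∀ (k : K) (h : H),
      β k * dot (δ k) (α h) = α (dot k h) * dot (γ (dot k h)) (β (pow k h)))
    (A6 : ∀ (k : K) (h : H),
      pow (δ k) (α h) * γ h = pow (γ (dot k h)) (β (pow k h)) * δ (pow k h))
    (A7 : ∀ (h' : H) (k' : K), ∃! p : H × K,
      h' = α p.1 * dot (γ p.1) (β p.2) ∧ k' = pow (γ p.1) (β p.2) * δ p.2) :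
    ({h : H | α h = 1} ∩ {h : H | γ h = 1} = {1}) ∧
    ({k : K | β k = 1} ∩ {k : K | δ k = 1} = {1}) :=
  zs_kernels_intersect_trivially_general dot pow C1a C1b C2a C2b C3 α β γ δ A1 A2 A3 A4 A7
end

section
/- Let G be the internal Zappa–Szép product of subgroups H and K. For every automorphism θ of G there exist unique maps α : H → H, β : K → H, γ : H → K, δ : K → K such that θ(h) = α(h)γ(h) for all h ∈ H and θ(k) = β(k)δ(k) for all k ∈ K, and these maps satisfy conditions (A1)–(A7). -/
/-- Conditions (A1)–(A7) for maps `α : H → H`, `β : K → H`, `γ : H → K`, `δ : K → K`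
with respect to mutual actions `dot : K → H → H` and `pow : K → H → K`. -/
def SatisfiesA {H K : Type*} [Group H] [Group K]
    (dot : K → H → H) (pow : K → H → K)
    (α : H → H) (β : K → H) (γ : H → K) (δ : K → K) : Prop :=
  (∀ h h' : H, α (h * h') = α h * dot (γ h) (α h')) ∧
  (∀ h h' : H, γ (h * h') = pow (γ h) (α h') * γ h') ∧
  (∀ k k' : K, β (k * k') = β k * dot (δ k) (β k')) ∧
  (∀ k k' : K, δ (k * k') = pow (δ k) (β k') * δ k') ∧
  (∀ (k : K) (h : H),
    β k * dot (δ k) (α h) = α (dot k h) * dot (γ (dot k h)) (β (pow k h))) ∧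
  (∀ (k : K) (h : H),
    pow (δ k) (α h) * γ h = pow (γ (dot k h)) (β (pow k h)) * δ (pow k h)) ∧
  (∀ (h' : H) (k' : K), ∃! p : H × K,
    h' = α p.1 * dot (γ p.1) (β p.2) ∧ k' = pow (γ p.1) (β p.2) * δ p.2)

/-- Let `G` be the internal Zappa–Szép product of subgroups `H` and `K`,
with the mutual actions `dot`, `pow` determined by the unique factorization `kh = (k·h)(k^h)`.
Then every automorphism `θ` of `G` determines a unique quadruple `(α, β, γ, δ)` of maps with
`θ h = α h * γ h` on `H` and `θ k = β k * δ k` on `K`, and this quadruple satisfies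
conditions (A1)–(A7). -/
theorem aut_exists_unique_quadruple {G : Type*} [Group G] (H K : Subgroup G)
    (huniq : ∀ g : G, ∃! p : H × K, g = (p.1 : G) * (p.2 : G))
    (dot : K → H → H) (pow : K → H → K)
    (hact : ∀ (k : K) (h : H), (k : G) * (h : G) = (dot k h : G) * (pow k h : G))
    (θ : G ≃* G) :
    ∃! q : (H → H) × ((K → H) × ((H → K) × (K → K))),
      (∀ h : H, θ (h : G) = (q.1 h : G) * (q.2.2.1 h : G)) ∧
      (∀ k : K, θ (k : G) = (q.2.1 k : G) * (q.2.2.2 k : G)) ∧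
      SatisfiesA dot pow q.1 q.2.1 q.2.2.1 q.2.2.2 := by
  classical
  have fac : ∀ (h h' : H) (k k' : K), (h : G) * k = (h' : G) * k' → h = h' ∧ k = k' := by
    intro h h' k k' e
    obtain ⟨p, hp, hu⟩ := huniq ((h : G) * (k : G))
    have e1 : ((h, k) : H × K) = p := hu (h, k) rfl
    have e2 : ((h', k') : H × K) = p := hu (h', k') e
    rw [← e2] at e1
    exact ⟨congrArg Prod.fst e1, congrArg Prod.snd e1⟩
  obtain ⟨F, hF⟩ : ∃ F : G → H × K, ∀ g, g = ((F g).1 : G) * (F g).2 :=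
    ⟨fun g => (huniq g).choose, fun g => (huniq g).choose_spec.1⟩
  set α : H → H := fun h => (F (θ h)).1 with hαdef
  set γ : H → K := fun h => (F (θ h)).2 with hγdef
  set β : K → H := fun k => (F (θ k)).1 with hβdef
  set δ : K → K := fun k => (F (θ k)).2 with hδdef
  have hα : ∀ h : H, θ h = (α h : G) * (γ h : G) := fun h => hF (θ h)
  have hβ : ∀ k : K, θ k = (β k : G) * (δ k : G) := fun k => hF (θ k)
  have hA12 : ∀ h h' : H,
      α (h * h') = α h * dot (γ h) (α h') ∧ γ (h * h') = pow (γ h) (α h') * γ h' := by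
    intro h h'
    apply fac
    rw [← hα (h * h')]
    push_cast
    rw [map_mul, hα h, hα h']
    simp only [mul_assoc]
    rw [← mul_assoc ((γ h : G)) ((α h' : G)), hact]
    simp only [mul_assoc]
  have hA34 : ∀ k k' : K,
      β (k * k') = β k * dot (δ k) (β k') ∧ δ (k * k') = pow (δ k) (β k') * δ k' := by
    intro k k'
    apply fac
    rw [← hβ (k * k')]
    push_cast
    rw [map_mul, hβ k, hβ k']
    simp only [mul_assoc]
    rw [← mul_assoc ((δ k : G)) ((β k' : G)), hact]
    simp only [mul_assoc]
  have hA56 : ∀ (k : K) (h : H),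
      β k * dot (δ k) (α h) = α (dot k h) * dot (γ (dot k h)) (β (pow k h)) ∧
      pow (δ k) (α h) * γ h = pow (γ (dot k h)) (β (pow k h)) * δ (pow k h) := by
    intro k h
    apply fac
    have e1 : ((β k * dot (δ k) (α h) : H) : G) * ((pow (δ k) (α h) * γ h : K) : G)
        = θ ((k : G) * (h : G)) := by
      rw [map_mul, hβ k, hα h]
      push_cast
      simp only [mul_assoc]
      rw [← mul_assoc ((δ k : G)) ((α h : G)), hact]
      simp only [mul_assoc]
    have e2 : ((α (dot k h) * dot (γ (dot k h)) (β (pow k h)) : H) : G) *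
        ((pow (γ (dot k h)) (β (pow k h)) * δ (pow k h) : K) : G)
        = θ ((k : G) * (h : G)) := by
      rw [hact, map_mul, hα (dot k h), hβ (pow k h)]
      push_cast
      simp only [mul_assoc]
      rw [← mul_assoc ((γ (dot k h) : G)) ((β (pow k h) : G)), hact]
      simp only [mul_assoc]
    rw [e1, e2]
  -- helper for A7 and uniqueness
  have hcomb : ∀ (h : H) (k : K), θ ((h : G) * (k : G))
      = ((α h * dot (γ h) (β k) : H) : G) * ((pow (γ h) (β k) * δ k : K) : G) := by
    intro h k
    rw [map_mul, hα h, hβ k]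
    push_cast
    simp only [mul_assoc]
    rw [← mul_assoc ((γ h : G)) ((β k : G)), hact]
    simp only [mul_assoc]
  refine ⟨⟨α, β, γ, δ⟩, ⟨hα, hβ, fun h h' => (hA12 h h').1, fun h h' => (hA12 h h').2,
      fun k k' => (hA34 k k').1, fun k k' => (hA34 k k').2,
      fun k h => (hA56 k h).1, fun k h => (hA56 k h).2, ?_⟩, ?_⟩
  · -- A7
    intro h' k'
    obtain ⟨⟨h, k⟩, hp, hu⟩ := huniq (θ.symm ((h' : G) * (k' : G)))
    have key : ((h' : G) * (k' : G)) = θ ((h : G) * (k : G)) := by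
      rw [← hp]; simp
    refine ⟨(h, k), ?_, ?_⟩
    · have := fac h' (α h * dot (γ h) (β k)) k' (pow (γ h) (β k) * δ k)
        (by rw [key, hcomb])
      exact ⟨this.1, this.2⟩
    · rintro ⟨h₁, k₁⟩ ⟨e1, e2⟩
      have : ((h' : G) * (k' : G)) = θ ((h₁ : G) * (k₁ : G)) := by
        rw [hcomb h₁ k₁, ← e1, ← e2]
      have := hu (h₁, k₁) (by rw [this]; simp)
      exact this
  · -- uniqueness of the quadruple
    rintro ⟨α', β', γ', δ'⟩ ⟨h1, h2, _⟩
    have eH : ∀ h : H, α' h = α h ∧ γ' h = γ h := by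
      intro h
      exact fac _ _ _ _ (by rw [← h1 h, hα h])
    have eK : ∀ k : K, β' k = β k ∧ δ' k = δ k := by
      intro k
      exact fac _ _ _ _ (by rw [← h2 k, hβ k])
    refine Prod.ext ?_ (Prod.ext ?_ (Prod.ext ?_ ?_)) <;> funext x <;> simp only []
    · exact (eH x).1
    · exact (eK x).1
    · exact (eH x).2
    · exact (eK x).2
end

section
/- Let G be the internal Zappa–Szép product of subgroups H and K, and let α : H → H, β : K → H, γ : H → K, δ : K → K be maps satisfying conditions (A1)–(A7). Then the map θ : G → G defined by θ(g) = α(h)γ(h)β(k)δ(k), where g = hk is the unique factorization of g with h ∈ H and k ∈ K, is an automorphism of G. -/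
/-- Let `G` be the internal Zappa–Szép product of subgroups `H` and `K`,
with mutual actions `dot`, `pow` determined by the unique factorization.  If the maps
`α, β, γ, δ` satisfy conditions (A1)–(A7), then the map `θ : G → G` sending the element
with factorization `h * k` to `α h * γ h * β k * δ k` is an automorphism of `G`. -/
theorem quadruple_gives_automorphism {G : Type*} [Group G] (H K : Subgroup G)
    (huniq : ∀ g : G, ∃! p : H × K, g = (p.1 : G) * (p.2 : G))
    (dot : K → H → H) (pow : K → H → K)
    (hact : ∀ (k : K) (h : H), (k : G) * (h : G) = (dot k h : G) * (pow k h : G))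
    (α : H → H) (β : K → H) (γ : H → K) (δ : K → K)
    (hA : SatisfiesA dot pow α β γ δ)
    (θ : G → G)
    (hθ : ∀ (h : H) (k : K),
      θ ((h : G) * (k : G)) = (α h : G) * (γ h : G) * (β k : G) * (δ k : G)) :
    ∃ e : G ≃* G, ∀ g : G, e g = θ g := by
  obtain ⟨hA1, hA2, hA3, hA4, hA5, hA6, hA7⟩ := hA
  -- right-associated form of the action relation
  have hact' : ∀ (k : K) (h : H) (g : G),
      (dot k h : G) * ((pow k h : G) * g) = (k : G) * ((h : G) * g) := by
    intro k h g
    rw [← mul_assoc, ← hact, mul_assoc]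
  -- coerced versions of (A5) and (A6)
  have cA5 : ∀ (k : K) (h : H),
      (β k : G) * (dot (δ k) (α h) : G)
        = (α (dot k h) : G) * (dot (γ (dot k h)) (β (pow k h)) : G) := by
    intro k h
    simpa using congrArg (fun x : H => (x : G)) (hA5 k h)
  have cA6 : ∀ (k : K) (h : H),
      (pow (δ k) (α h) : G) * (γ h : G)
        = (pow (γ (dot k h)) (β (pow k h)) : G) * (δ (pow k h) : G) := by
    intro k h
    simpa using congrArg (fun x : K => (x : G)) (hA6 k h)
  -- the key "commuting" identity, right-associated
  have mid' : ∀ (k : K) (h : H) (g : G),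
      (α (dot k h) : G) * ((γ (dot k h) : G) * ((β (pow k h) : G) * ((δ (pow k h) : G) * g)))
        = (β k : G) * ((δ k : G) * ((α h : G) * ((γ h : G) * g))) := by
    intro k h g
    rw [← hact' (δ k) (α h), ← mul_assoc (β k : G), cA5 k h, mul_assoc,
      ← mul_assoc ((pow (δ k) (α h) : K) : G), cA6 k h, mul_assoc, hact']
  -- θ of a factorized element, written as a single H-element times a single K-element
  have key : ∀ (h : H) (k : K),
      θ ((h : G) * (k : G))
        = ((α h * dot (γ h) (β k) : H) : G) * ((pow (γ h) (β k) * δ k : K) : G) := by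
    intro h k
    rw [hθ]
    push_cast
    simp only [mul_assoc]
    rw [hact']
  -- θ is multiplicative
  have hmul : ∀ g₁ g₂ : G, θ (g₁ * g₂) = θ g₁ * θ g₂ := by
    intro g₁ g₂
    obtain ⟨⟨h, k⟩, hp₁, -⟩ := huniq g₁
    obtain ⟨⟨h', k'⟩, hp₂, -⟩ := huniq g₂
    rw [hp₁, hp₂]
    have harg : ((h : G) * (k : G)) * ((h' : G) * (k' : G))
        = ((h * dot k h' : H) : G) * ((pow k h' * k' : K) : G) := by
      push_cast
      simp only [mul_assoc]
      rw [hact']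
    rw [harg, hθ, hθ, hθ, hA1, hA2, hA3, hA4]
    push_cast
    simp only [mul_assoc]
    rw [hact' (γ h) (α (dot k h')), hact' (δ (pow k h')) (β k'),
      mid' k h' ((β k' : G) * (δ k' : G))]
  -- θ is bijective
  have hbij : Function.Bijective θ := by
    constructor
    · intro g₁ g₂ he
      obtain ⟨⟨h₁, k₁⟩, hp₁, -⟩ := huniq g₁
      obtain ⟨⟨h₂, k₂⟩, hp₂, -⟩ := huniq g₂
      rw [hp₁, hp₂, key, key] at he
      obtain ⟨q, -, hu⟩ := huniq (((α h₁ * dot (γ h₁) (β k₁) : H) : G)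
        * ((pow (γ h₁) (β k₁) * δ k₁ : K) : G))
      have e1 := hu (α h₁ * dot (γ h₁) (β k₁), pow (γ h₁) (β k₁) * δ k₁) rfl
      have e2 := hu (α h₂ * dot (γ h₂) (β k₂), pow (γ h₂) (β k₂) * δ k₂) he
      have e3 := e1.trans e2.symm
      have eA : α h₁ * dot (γ h₁) (β k₁) = α h₂ * dot (γ h₂) (β k₂) :=
        congrArg Prod.fst e3
      have eB : pow (γ h₁) (β k₁) * δ k₁ = pow (γ h₂) (β k₂) * δ k₂ :=
        congrArg Prod.snd e3
      obtain ⟨q', -, hu'⟩ := hA7 (α h₁ * dot (γ h₁) (β k₁)) (pow (γ h₁) (β k₁) * δ k₁)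
      have f1 := hu' (h₁, k₁) ⟨rfl, rfl⟩
      have f2 := hu' (h₂, k₂) ⟨eA, eB⟩
      have f3 : ((h₁, k₁) : H × K) = (h₂, k₂) := f1.trans f2.symm
      rw [hp₁, hp₂, Prod.mk.injEq] at *
      rw [f3.1, f3.2]
    · intro g'
      obtain ⟨⟨h', k'⟩, hp, -⟩ := huniq g'
      obtain ⟨⟨h, k⟩, ⟨e1, e2⟩, -⟩ := hA7 h' k'
      exact ⟨(h : G) * (k : G), by rw [key, hp, e1, e2]⟩
  exact ⟨{ Equiv.ofBijective θ hbij with map_mul' := hmul }, fun g => rfl⟩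
end

section
/- Let G be the internal Zappa–Szép product of subgroups H and K. Let θ and θ' be automorphisms of G with associated quadruples (α, β, γ, δ) and (α', β', γ', δ') respectively (so θ(h) = α(h)γ(h), θ(k) = β(k)δ(k), and similarly for θ'). Then the quadruple associated with the composition θ' ∘ θ is (α'α + (γ'α)·(β'γ), α'β + (γ'β)·(β'δ), (γ'α)^{β'γ} + δ'γ, (γ'β)^{β'δ} + δ'δ); that is, for all h ∈ H and k ∈ K: (θ'∘θ)(h) = [α'(α(h)) (γ'(α(h))·β'(γ(h)))] [γ'(α(h))^{β'(γ(h))} δ'(γ(h))] and (θ'∘θ)(k) = [α'(β(k)) (γ'(β(k))·β'(δ(k)))] [γ'(β(k))^{β'(δ(k))} δ'(δ(k))], where the first bracket is the H-component and the second bracket is the K-component of the image. -/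
/-- Let `G` be the internal Zappa–Szép product of subgroups `H` and `K`,
with mutual actions `dot`, `pow` determined by the unique factorization.  If `θ` and `θ'`
are automorphisms of `G` with associated quadruples `(α, β, γ, δ)` and `(α', β', γ', δ')`,
then the quadruple associated with `θ' ∘ θ` is
`(α'α + (γ'α)·(β'γ), α'β + (γ'β)·(β'δ), (γ'α)^{β'γ} + δ'γ, (γ'β)^{β'δ} + δ'δ)`:
for each `h ∈ H` the `H`-component of `(θ' ∘ θ)(h)` is `α'(α h) * (γ'(α h) · β'(γ h))`
and the `K`-component is `γ'(α h)^{β'(γ h)} * δ'(γ h)`, and similarly on `K`. -/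
theorem composition_quadruple {G : Type*} [Group G] (H K : Subgroup G)
    (huniq : ∀ g : G, ∃! p : H × K, g = (p.1 : G) * (p.2 : G))
    (dot : K → H → H) (pow : K → H → K)
    (hact : ∀ (k : K) (h : H), (k : G) * (h : G) = (dot k h : G) * (pow k h : G))
    (θ θ' : G ≃* G)
    (α : H → H) (β : K → H) (γ : H → K) (δ : K → K)
    (α' : H → H) (β' : K → H) (γ' : H → K) (δ' : K → K)
    (hθH : ∀ h : H, θ (h : G) = (α h : G) * (γ h : G))
    (hθK : ∀ k : K, θ (k : G) = (β k : G) * (δ k : G))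
    (hθ'H : ∀ h : H, θ' (h : G) = (α' h : G) * (γ' h : G))
    (hθ'K : ∀ k : K, θ' (k : G) = (β' k : G) * (δ' k : G)) :
    (∀ h : H, θ' (θ (h : G)) =
      ((α' (α h) * dot (γ' (α h)) (β' (γ h)) : H) : G) *
      ((pow (γ' (α h)) (β' (γ h)) * δ' (γ h) : K) : G)) ∧
    (∀ k : K, θ' (θ (k : G)) =
      ((α' (β k) * dot (γ' (β k)) (β' (δ k)) : H) : G) *
      ((pow (γ' (β k)) (β' (δ k)) * δ' (δ k) : K) : G)) := by
  constructor
  · intro h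
    rw [hθH, map_mul, hθ'H, hθ'K]
    push_cast
    rw [show (α' (α h) : G) * γ' (α h) * (β' (γ h) * δ' (γ h))
        = α' (α h) * ((γ' (α h) : G) * β' (γ h)) * δ' (γ h) by group,
      hact]
    group
  · intro k
    rw [hθK, map_mul, hθ'H, hθ'K]
    push_cast
    rw [show (α' (β k) : G) * γ' (β k) * (β' (δ k) * δ' (δ k))
        = α' (β k) * ((γ' (β k) : G) * β' (δ k)) * δ' (δ k) by group,
      hact]
    group
end

section
/- Let G be a group and let a, b ∈ G satisfy a^m = 1, b⁴ = 1, ab = b³a^{2t+1} and a²b = ba^{2s}, where m is an even positive integer and t, s are integers with 2s² ≡ 2 (mod m). Then for every natural number l: if l is even, a^l b = b a^{ls}, and if l is odd, a^l b = b³ a^{2t+1+(l−1)s}. -/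
/-- In a group `G` with elements `a`, `b` satisfying `a^m = 1`, `b⁴ = 1`,
`ab = b³a^{2t+1}` and `a²b = ba^{2s}` (where `m` is an even positive integer and
`2s² ≡ 2 (mod m)`), for every natural number `l` we have `aˡ b = b a^{ls}` if `l` is even
and `aˡ b = b³ a^{2t+1+(l−1)s}` if `l` is odd. -/
theorem zs4m_commutation {G : Type*} [Group G] (a b : G) (m : ℕ) (t s : ℤ)
    (hm : 0 < m) (hmEven : Even m)
    (hG1 : 2 * s ^ 2 ≡ 2 [ZMOD (m : ℤ)])
    (ham : a ^ m = 1) (hb4 : b ^ 4 = 1)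
    (hab : a * b = b ^ 3 * a ^ (2 * t + 1))
    (ha2b : a ^ 2 * b = b * a ^ (2 * s)) :
    ∀ l : ℕ,
      (Even l → a ^ l * b = b * a ^ ((l : ℤ) * s)) ∧
      (Odd l → a ^ l * b = b ^ 3 * a ^ (2 * t + 1 + ((l : ℤ) - 1) * s)) := by
  have key : ∀ k : ℕ, a ^ (2 * k) * b = b * a ^ ((2 * (k : ℤ)) * s) := by
    intro k
    induction k with
    | zero => simp
    | succ k ih =>
      have h1 : a ^ (2 * (k + 1)) * b = a ^ (2 * k) * (a ^ 2 * b) := by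
        rw [mul_add, mul_one, pow_add, mul_assoc]
      rw [h1, ha2b, ← mul_assoc, ih, mul_assoc, ← zpow_add]
      congr 1
      push_cast
      ring
  intro l
  constructor
  · intro hl
    obtain ⟨k, hk⟩ := hl
    have hk' : l = 2 * k := by omega
    subst hk'
    rw [key k]
    norm_cast
  · intro hl
    obtain ⟨k, hk⟩ := hl
    subst hk
    have h1 : a ^ (2 * k + 1) * b = a * (a ^ (2 * k) * b) := by
      rw [pow_succ', mul_assoc]
    rw [h1, key k, ← mul_assoc, hab, mul_assoc, ← zpow_add]
    congr 1
    push_cast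
    ring
end

section
/- Let p be a prime, m a positive integer with p ∣ m, and r, λ positive integers such that p(pr+1)^p ≡ p (mod m). Then for every natural number i, (pr+1)^{ipλ} ≡ i((pr+1)^{pλ} − 1) + 1 (mod m). -/
/-- Let `p` be a prime, `m` a positive integer with `p ∣ m`, and `r, λ`
positive integers such that `p(pr+1)^p ≡ p (mod m)`.  Then for every natural number `i`,
`(pr+1)^{ipλ} ≡ i((pr+1)^{pλ} − 1) + 1 (mod m)`. -/
theorem zsp2_power_congruence (p m r lam : ℕ) (hp : p.Prime) (hm : 0 < m) (hpm : p ∣ m)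
    (hr : 0 < r) (hlam : 0 < lam)
    (hcong : (p : ℤ) * ((p : ℤ) * r + 1) ^ p ≡ (p : ℤ) [ZMOD (m : ℤ)]) :
    ∀ i : ℕ, ((p : ℤ) * r + 1) ^ (i * p * lam) ≡
      (i : ℤ) * (((p : ℤ) * r + 1) ^ (p * lam) - 1) + 1 [ZMOD (m : ℤ)] := by
  set a : ℤ := (p : ℤ) * r + 1 with ha
  -- m ∣ p * (a^p - 1)
  have hx : (m : ℤ) ∣ (p : ℤ) * (a ^ p - 1) := by
    have h := hcong.dvd
    have : (p : ℤ) * (a ^ p - 1) = -((p : ℤ) - (p : ℤ) * a ^ p) := by ring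
    rw [this]
    exact dvd_neg.mpr h
  -- p ∣ a^p - 1
  have hpx : (p : ℤ) ∣ a ^ p - 1 := by
    have h1 : (1 : ℤ) ≡ a [ZMOD (p : ℤ)] := by
      have : a - 1 = (p : ℤ) * r := by ring
      exact (Int.modEq_iff_dvd.mpr (by rw [this]; exact Dvd.intro _ rfl))
    exact Int.modEq_iff_dvd.mp (by simpa using h1.pow p)
  obtain ⟨y, hy⟩ := hpx
  -- m ∣ (a^p - 1)^2
  have hsq : (m : ℤ) ∣ (a ^ p - 1) ^ 2 := by
    have : (a ^ p - 1) ^ 2 = ((p : ℤ) * (a ^ p - 1)) * y := by rw [hy]; ring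
    rw [this]
    exact hx.mul_right y
  -- (a^p - 1) ∣ a^(p*lam) - 1
  have hdvd : a ^ p - 1 ∣ a ^ (p * lam) - 1 := by
    have := sub_dvd_pow_sub_pow (a ^ p) 1 lam
    simpa [pow_mul] using this
  -- m ∣ (a^(p*lam) - 1)^2
  have hAsq : (m : ℤ) ∣ (a ^ (p * lam) - 1) ^ 2 := by
    obtain ⟨z, hz⟩ := hdvd
    have : (a ^ (p * lam) - 1) ^ 2 = (a ^ p - 1) ^ 2 * z ^ 2 := by rw [hz]; ring
    rw [this]
    exact hsq.mul_right _
  set A : ℤ := a ^ (p * lam) with hA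
  intro i
  induction i with
  | zero => simp [Int.ModEq.refl]
  | succ i ih =>
    have hpow : a ^ ((i + 1) * p * lam) = a ^ (i * p * lam) * A := by
      rw [hA, ← pow_add]
      ring_nf
    rw [hpow]
    have h1 : a ^ (i * p * lam) * A ≡ ((i : ℤ) * (A - 1) + 1) * A [ZMOD (m : ℤ)] :=
      ih.mul (Int.ModEq.refl A)
    refine h1.trans ?_
    have h2 : (m : ℤ) ∣ (((i : ℕ) + 1 : ℤ) * (A - 1) + 1) - (((i : ℤ) * (A - 1) + 1) * A) := by
      have : (((i : ℕ) + 1 : ℤ) * (A - 1) + 1) - (((i : ℤ) * (A - 1) + 1) * A)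
          = -((i : ℤ) * (A - 1) ^ 2) := by push_cast; ring
      rw [this]
      exact (hAsq.mul_left _).neg_right
    have := Int.modEq_iff_dvd.mpr h2
    simpa using this.symm.symm
end

section
/- Let G be a group and a, b ∈ G elements satisfying a^m = 1, b^{p²} = 1, ab = b^t a^{pr+1} and a^p b = b a^{p(pr+1)}, where p is an odd prime, p ∣ m, t = 1 + λp with gcd(λ, p) = 1, gcd(r, p) = 1, and p(pr+1)^p ≡ p (mod m). Then for all natural numbers l and j: a^l b^j = b^{j t^l} a^{(j·l(l−1)/2)·((pr+1)^{λp} − 1) + l(pr+1)^j}. -/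
private lemma binom_aux (x : ℕ) : ∀ n : ℕ, ∃ k : ℕ, (1 + x) ^ n = 1 + n * x + x ^ 2 * k := by
  intro n
  induction n with
  | zero => exact ⟨0, by ring⟩
  | succ n ih =>
    obtain ⟨k, hk⟩ := ih
    exact ⟨n + k + k * x, by rw [pow_succ, hk]; ring⟩

/-- Let `G` be a group and `a, b ∈ G` satisfy `a^m = 1`, `b^{p²} = 1`,
`ab = bᵗ a^{pr+1}` and `aᵖ b = b a^{p(pr+1)}`, where `p` is an odd prime, `p ∣ m`,
`t = 1 + λp` with `gcd(λ, p) = 1`, `gcd(r, p) = 1`, and `p(pr+1)^p ≡ p (mod m)`.  Then for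
all natural numbers `l` and `j`:
`aˡ bʲ = b^{j tˡ} a^{(j·l(l−1)/2)·((pr+1)^{λp} − 1) + l(pr+1)ʲ}`. -/
theorem zsp2_commutation {G : Type*} [Group G] (a b : G) (p m r lam : ℕ)
    (hp : p.Prime) (hpodd : Odd p) (hm : 0 < m) (hpm : p ∣ m)
    (hlamp : Nat.gcd lam p = 1) (hrp : Nat.gcd r p = 1)
    (hcong : p * (p * r + 1) ^ p ≡ p [MOD m])
    (ham : a ^ m = 1) (hbp2 : b ^ p ^ 2 = 1)
    (hab : a * b = b ^ (1 + lam * p) * a ^ (p * r + 1))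
    (hapb : a ^ p * b = b * a ^ (p * (p * r + 1))) :
    ∀ l j : ℕ, a ^ l * b ^ j =
      b ^ (j * (1 + lam * p) ^ l) *
        a ^ (j * (l * (l - 1) / 2) * ((p * r + 1) ^ (lam * p) - 1) + l * (p * r + 1) ^ j) := by
  intro l j
  set s := p * r + 1 with hs
  set t := 1 + lam * p with ht
  set X := s ^ (lam * p) - 1 with hXdef
  have hsj1 : ∀ n : ℕ, 1 ≤ s ^ n := fun n => Nat.one_le_pow _ _ (by omega)
  set d := s ^ p - 1 with hddef
  have hd : s ^ p = 1 + d := by have := hsj1 p; omega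
  have hX : s ^ (lam * p) = 1 + X := by have := hsj1 (lam * p); omega
  have h1s : (1 : ℕ) ≡ s [MOD p] :=
    (Nat.modEq_iff_dvd' (by omega)).mpr ⟨r, by omega⟩
  have hpj : ∀ n : ℕ, p ∣ s ^ n - 1 := fun n => by
    have h := (Nat.modEq_iff_dvd' (hsj1 n)).mp (by simpa using h1s.pow n)
    simpa using h
  have hpd : p ∣ d := hpj p
  -- m ∣ p * d
  have hmd : m ∣ p * d := by
    have hle : p ≤ p * s ^ p := Nat.le_mul_of_pos_right p (hsj1 p)
    have h := (Nat.modEq_iff_dvd' hle).mp hcong.symm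
    have heq : p * s ^ p - p = p * d := by
      rw [hd, Nat.mul_add, Nat.mul_one, Nat.add_sub_cancel_left]
    rwa [heq] at h
  -- d ∣ X
  have hdX : d ∣ X := by
    obtain ⟨k, hk⟩ := binom_aux d lam
    have hval : s ^ (lam * p) = 1 + (lam * d + d ^ 2 * k) := by
      rw [mul_comm lam p, pow_mul, hd, hk]; ring
    have hX' : X = lam * d + d ^ 2 * k := Nat.add_left_cancel (hX.symm.trans hval)
    exact ⟨lam + d * k, by rw [hX']; ring⟩
  have hpX : p ∣ X := hpd.trans hdX
  have hmdd : m ∣ d * d := by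
    obtain ⟨e, he⟩ := hpd
    refine hmd.trans ⟨e, ?_⟩
    nth_rewrite 1 [he]
    ring
  have hmd2 : m ∣ d ^ 2 := by rw [pow_two]; exact hmdd
  have hmX2 : m ∣ X ^ 2 := by
    obtain ⟨u, hu⟩ := hpX
    obtain ⟨v, hv⟩ := hdX
    refine hmd.trans ⟨u * v, ?_⟩
    rw [pow_two]
    nth_rewrite 1 [hu]
    rw [hv]; ring
  have hmXs : ∀ n : ℕ, m ∣ X * (s ^ n - 1) := fun n => by
    obtain ⟨v, hv⟩ := hdX
    obtain ⟨w, hw⟩ := hpj n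
    exact hmd.trans ⟨v * w, by rw [hv, hw]; ring⟩
  -- s ^ (p*p) ≡ 1 [MOD m]
  have hone : (1 : ℕ) ≡ s ^ (p * p) [MOD m] := by
    obtain ⟨k, hk⟩ := binom_aux d p
    have hval : s ^ (p * p) = 1 + (p * d + d ^ 2 * k) := by
      rw [pow_mul, hd, hk]; ring
    refine (Nat.modEq_iff_dvd' (hsj1 _)).mpr ?_
    rw [hval, Nat.add_sub_cancel_left]
    exact Nat.dvd_add hmd (hmd2.mul_right k)
  -- key arithmetic congruence
  have maincong : ∀ L J : ℕ, s ^ (J * t ^ L) ≡ s ^ J + J * L * X [MOD m] := by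
    intro L J
    obtain ⟨K, hK⟩ := binom_aux (lam * p) L
    obtain ⟨k₂, hk₂⟩ := binom_aux X (J * L)
    have hsplit : J * t ^ L = J + lam * p * (J * L) + p * p * (lam * lam * K * J) := by
      rw [ht, hK]; ring
    have c1 : (s ^ (p * p)) ^ (lam * lam * K * J) ≡ 1 [MOD m] := by
      simpa using (hone.pow (lam * lam * K * J)).symm
    have c2 : 1 + J * L * X + X ^ 2 * k₂ ≡ 1 + J * L * X [MOD m] := by
      refine ((Nat.modEq_iff_dvd' (Nat.le_add_right _ _)).mpr ?_).symm
      rw [Nat.add_sub_cancel_left]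
      exact hmX2.mul_right k₂
    have c3 : X * s ^ J ≡ X [MOD m] := by
      have hle : X ≤ X * s ^ J := Nat.le_mul_of_pos_right X (hsj1 J)
      refine ((Nat.modEq_iff_dvd' hle).mpr ?_).symm
      have h1 : X * s ^ J - X = X * (s ^ J - 1) := by
        obtain ⟨q, hq⟩ := hpj J
        have hq' : s ^ J = 1 + p * q := by
          have h := (Nat.sub_eq_iff_eq_add (hsj1 J)).mp hq
          rw [h, Nat.add_comm]
        rw [hq', Nat.mul_add, Nat.mul_one, Nat.add_sub_cancel_left,
          Nat.add_sub_cancel_left]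
      rw [h1]
      exact hmXs J
    calc s ^ (J * t ^ L)
        = s ^ J * (1 + J * L * X + X ^ 2 * k₂) * (s ^ (p * p)) ^ (lam * lam * K * J) := by
          rw [hsplit, pow_add, pow_add, pow_mul s (p * p), pow_mul s (lam * p), hX, hk₂, mul_comm J L]
      _ ≡ s ^ J * (1 + J * L * X) * 1 [MOD m] := ((Nat.ModEq.refl _).mul c2).mul c1
      _ = s ^ J + J * L * (X * s ^ J) := by ring
      _ ≡ s ^ J + J * L * X [MOD m] := (Nat.ModEq.refl _).add (c3.mul_left (J * L))
  -- group power lemma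
  have hord : orderOf a ∣ m := orderOf_dvd_of_pow_eq_one ham
  have hpow : ∀ x y : ℕ, x ≡ y [MOD m] → a ^ x = a ^ y := fun x y h =>
    pow_eq_pow_iff_modEq.mpr (h.of_dvd hord)
  -- group commutation lemmas
  have L0 : ∀ q : ℕ, a ^ (p * q) * b = b * a ^ (p * q * s) := by
    intro q
    induction q with
    | zero => simp
    | succ q ih =>
      rw [show p * (q + 1) = p * q + p by ring, pow_add, mul_assoc, hapb,
        ← mul_assoc, ih, mul_assoc, ← pow_add,
        show p * q * s + p * s = p * (q + 1) * s by ring,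
        show (p * q + p) * s = p * (q + 1) * s by ring]
  have L1 : ∀ q : ℕ, a ^ (1 + p * q) * b = b ^ t * a ^ ((1 + p * q) * s) := by
    intro q
    rw [pow_add, pow_one, mul_assoc, L0 q, ← mul_assoc, hab, mul_assoc, ← pow_add,
      show s + p * q * s = (1 + p * q) * s by ring]
  have L2 : ∀ n : ℕ, a * b ^ n = b ^ (n * t) * a ^ s ^ n := by
    intro n
    induction n with
    | zero => simp
    | succ n ih =>
      rw [pow_succ, ← mul_assoc, ih, mul_assoc]
      obtain ⟨q, hq⟩ := hpj n
      have hq' : s ^ n = 1 + p * q := by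
        have h := (Nat.sub_eq_iff_eq_add (hsj1 n)).mp hq
        rw [h, Nat.add_comm]
      rw [hq', L1 q, ← mul_assoc, ← pow_add,
        show n * t + t = (n + 1) * t by ring, ← hq', ← pow_succ]
  -- main induction
  induction l with
  | zero => simp
  | succ l ih =>
    rw [pow_succ', mul_assoc, ih, ← mul_assoc, L2 (j * t ^ l), mul_assoc, ← pow_add]
    have hb : j * t ^ l * t = j * t ^ (l + 1) := by rw [pow_succ]; ring
    have htri : (l + 1) * l / 2 = l * (l - 1) / 2 + l := by
      have h1 : (l + 1) * ((l + 1) - 1) / 2 = (l + 1).choose 2 :=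
        (Nat.choose_two_right (l + 1)).symm
      have h2 : l * (l - 1) / 2 = l.choose 2 := (Nat.choose_two_right l).symm
      have h3 : (l + 1).choose 2 = l.choose 1 + l.choose 2 := Nat.choose_succ_succ l 1
      simp only [Nat.add_sub_cancel] at h1
      rw [h1, h2, h3, Nat.choose_one_right]
      omega
    have hE : j * ((l + 1) * (l + 1 - 1) / 2) * X + (l + 1) * s ^ j
        = (s ^ j + j * l * X) + (j * (l * (l - 1) / 2) * X + l * s ^ j) := by
      rw [Nat.add_sub_cancel, htri]
      ring
    congr 1
    · rw [hb]
    · apply hpow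
      rw [hE]
      exact (maincong l j).add_right _
end
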